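/- In the balanced two-class Gaussian model, the refinement error of the linear sigmoid model f(x) = σ(wᵀx) with respect to a proper loss ℓ whose entropy e_ℓ is symmetric about 1/2 equals E_{z∼N(0,1)}[ e_ℓ( σ( a_w (z + a_w/2) ) ) ], where a_w = ⟨w,w*⟩_Σ / ||w||_Σ. In particular, the refinement error is invariant under rescaling w ↦ s·w for any s > 0. -/

import Mathlib

/-!
Conditionally on the class, the score `t = wᵀX` is `N(±m, v)` with `m = wᵀμ`, `v = wᵀΣw`, so by
Bayes' rule the posterior probability of `Y = 1` given `t` is `σ(2mt/v)`. As `e_ℓ ∘ σ` is even, both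
classes contribute the same expected entropy, and the refinement error is `E[e_ℓ(σ(2mt/v))]` for
`t ∼ N(m, v)`; writing `t = √v z + m` turns the logit into `a_w (z + a_w / 2)`. Finally `a_w` is
invariant under positive rescaling of `w`.
-/

open Matrix MeasureTheory ProbabilityTheory

noncomputable section

/-- The sigmoid function. -/
def sigmoid (t : ℝ) : ℝ := 1 / (1 + Real.exp (-t))

/-- The expertise level `a_w = ⟨w, w*⟩_Σ / ‖w‖_Σ` with `w* = 2 Σ⁻¹ μ`. -/
def expertise {p : ℕ} (S : Matrix (Fin p) (Fin p) ℝ) (μv w : Fin p → ℝ) : ℝ :=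
  (w ⬝ᵥ S.mulVec ((2 : ℝ) • S⁻¹.mulVec μv)) / Real.sqrt (w ⬝ᵥ S.mulVec w)

/-- The refinement error `R_ℓ(f) = E[e_ℓ(E[Y | f(X)])]` of the linear sigmoid model
`f(x) = σ(wᵀx)`, written with `E[Y | f(X)] = E[1_{Y=1} | σ(wᵀX)] = E[1_{Y=1} | wᵀX]`. -/
def refR {p : ℕ} {Ω : Type*} [MeasurableSpace Ω] (μ : Measure Ω)
    (X : Ω → Fin p → ℝ) (Y : Ω → ℝ) (eℓ : ℝ → ℝ) (w : Fin p → ℝ) : ℝ :=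
  ∫ ω, eℓ (MeasureTheory.condExp
    (MeasurableSpace.comap (fun ω' => w ⬝ᵥ X ω') inferInstance) μ
    (fun ω' => if Y ω' = 1 then (1 : ℝ) else 0) ω) ∂μ

open scoped ENNReal NNReal

namespace MeasureTheory

variable {Ω β : Type*} [MeasurableSpace Ω] [MeasurableSpace β] {μ : Measure Ω}

lemma condExp_indicator_comap_ae_eq [IsFiniteMeasure μ] {T : Ω → β} (hT : Measurable T)
    {A : Set Ω} (hA : MeasurableSet A) {g : β → ℝ} (hg : Measurable g) (hg_nonneg : 0 ≤ g)
    (h : (μ.map T).withDensity (fun t => ENNReal.ofReal (g t)) = (μ.restrict A).map T) :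
    μ[A.indicator 1 | MeasurableSpace.comap T inferInstance] =ᵐ[μ] g ∘ T := by
  have hg_int : Integrable g (μ.map T) := by
    rw [← lintegral_ofReal_ne_top_iff_integrable hg.aestronglyMeasurable (ae_of_all _ hg_nonneg),
      ← setLIntegral_univ, ← withDensity_apply _ MeasurableSet.univ, h]
    exact measure_ne_top _ _
  have hgT : Integrable (g ∘ T) μ :=
    (integrable_map_measure hg.aestronglyMeasurable hT.aemeasurable).mp hg_int
  refine (ae_eq_condExp_of_forall_setIntegral_eq hT.comap_le
    ((integrable_const 1).indicator hA) (fun _ _ _ => hgT.integrableOn) ?_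
    (hg.comp (comap_measurable T)).aestronglyMeasurable).symm
  rintro _ ⟨B, hB, rfl⟩ -
  calc ∫ ω in T ⁻¹' B, g (T ω) ∂μ = ∫ t in B, g t ∂μ.map T :=
        (setIntegral_map hB hg.aestronglyMeasurable hT.aemeasurable).symm
    _ = ((μ.map T).withDensity (fun t => ENNReal.ofReal (g t)) B).toReal := by
        rw [withDensity_apply _ hB, integral_eq_lintegral_of_nonneg_ae
          (ae_of_all _ hg_nonneg) hg.aestronglyMeasurable]
    _ = ∫ ω in T ⁻¹' B, A.indicator 1 ω ∂μ := by
        rw [h, Measure.map_apply hT hB, Measure.restrict_apply (hT hB), setIntegral_indicator hA]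
        simp [measureReal_def]

end MeasureTheory

namespace ProbabilityTheory

lemma gaussianPDFReal_neg_eq_mul_exp (m : ℝ) (v : ℝ≥0) (t : ℝ) :
    gaussianPDFReal (-m) v t = gaussianPDFReal m v t * Real.exp (-(2 * m * t / v)) := by
  simp only [gaussianPDFReal]
  rw [mul_assoc _ (Real.exp _), ← Real.exp_add]
  congr 2
  by_cases hv : (v : ℝ) = 0
  · simp [hv]
  field_simp
  ring

/-- Bayes' rule for the two classes `N(m, v)` and `N(-m, v)` with equal priors. -/
lemma sigmoid_mul_gaussianPDFReal_add_neg (m : ℝ) (v : ℝ≥0) (t : ℝ) :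
    Real.sigmoid (2 * m * t / v) * (gaussianPDFReal m v t + gaussianPDFReal (-m) v t)
      = gaussianPDFReal m v t := by
  rw [gaussianPDFReal_neg_eq_mul_exp, Real.sigmoid_def, ← mul_one_add, mul_comm,
    add_comm 1, mul_assoc, mul_inv_cancel₀ (by positivity), mul_one]

lemma withDensity_sigmoid_gaussianReal_add_neg (m : ℝ) {v : ℝ≥0} (hv : v ≠ 0) :
    (gaussianReal m v + gaussianReal (-m) v).withDensity
      (fun t => ENNReal.ofReal (Real.sigmoid (2 * m * t / v))) = gaussianReal m v := by
  rw [gaussianReal_of_var_ne_zero _ hv, gaussianReal_of_var_ne_zero _ hv,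
    ← withDensity_add_left (measurable_gaussianPDF _ _),
    ← withDensity_mul _ (by fun_prop) (by fun_prop)]
  congr 1
  funext t
  have hpdf := add_nonneg (gaussianPDFReal_nonneg m v t) (gaussianPDFReal_nonneg (-m) v t)
  simp only [Pi.mul_apply, Pi.add_apply, gaussianPDF]
  rw [← ENNReal.ofReal_add (gaussianPDFReal_nonneg _ _ _) (gaussianPDFReal_nonneg _ _ _),
    ← ENNReal.ofReal_mul hpdf, mul_comm, sigmoid_mul_gaussianPDFReal_add_neg]

lemma map_gaussianReal_neg_of_even {f : ℝ → ℝ} (hf : Measurable f) (hf_even : ∀ t, f (-t) = f t)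
    (m : ℝ) (v : ℝ≥0) : (gaussianReal (-m) v).map f = (gaussianReal m v).map f := by
  rw [← gaussianReal_map_neg, Measure.map_map hf measurable_neg,
    show f ∘ Neg.neg = f from funext hf_even]

lemma integral_half_smul_gaussianReal_add_neg_of_even {f : ℝ → ℝ} (hf : Measurable f)
    (hf_even : ∀ t, f (-t) = f t) (m : ℝ) (v : ℝ≥0) :
    ∫ t, f t ∂((1 / 2 : ℝ≥0∞) • (gaussianReal m v + gaussianReal (-m) v))
      = ∫ t, f t ∂gaussianReal m v := by
  have integral_eq_integral_map (ν : Measure ℝ) : ∫ t, f t ∂ν = ∫ x, x ∂ν.map f :=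
    (integral_map hf.aemeasurable aestronglyMeasurable_id).symm
  rw [integral_eq_integral_map, integral_eq_integral_map, Measure.map_smul, Measure.map_add _ _ hf,
    map_gaussianReal_neg_of_even hf hf_even, smul_add, ← add_smul, ENNReal.add_halves, one_smul]

lemma gaussianReal_eq_map_standard (m : ℝ) (v : ℝ≥0) :
    gaussianReal m v = (gaussianReal 0 1).map (fun z => √v * z + m) := by
  rw [show (fun z => √v * z + m) = (· + m) ∘ (√v * ·) from rfl,
    ← Measure.map_map (measurable_add_const m) (measurable_const_mul _),
    gaussianReal_map_const_mul, gaussianReal_map_add_const]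
  congr
  · ring
  · ext; simp

variable {Ω : Type*} [MeasurableSpace Ω] {μ : Measure Ω}

lemma restrict_eq_smul_cond {s : Set Ω} (hs : μ s ≠ ∞) : μ.restrict s = μ s • μ[|s] := by
  rcases eq_or_ne (μ s) 0 with h0 | h0
  · simp [Measure.restrict_eq_zero.mpr h0, h0]
  · rw [cond, smul_smul, ENNReal.mul_inv_cancel h0 hs, one_smul]

lemma eq_half_smul_cond_add_cond [IsProbabilityMeasure μ] {A B : Set Ω} (hA : MeasurableSet A)
    (hB : MeasurableSet B) (hAB : Disjoint A B) (hμA : μ A = 1 / 2) (hμB : μ B = 1 / 2) :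
    μ = (1 / 2 : ℝ≥0∞) • (μ[|A] + μ[|B]) := by
  have hμAB : μ (A ∪ B)ᶜ = 0 := by
    rw [measure_compl (hA.union hB) (measure_ne_top μ _), measure_union hAB hB, hμA, hμB,
      ENNReal.add_halves, measure_univ, tsub_self]
  conv_lhs => rw [← Measure.restrict_eq_self_of_ae_mem (ae_iff.mpr hμAB)]
  rw [Measure.restrict_union hAB hB, restrict_eq_smul_cond (measure_ne_top μ A),
    restrict_eq_smul_cond (measure_ne_top μ B), hμA, hμB, smul_add]

theorem integral_comp_condExp_indicator_of_gaussian_classes [IsProbabilityMeasure μ]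
    {T : Ω → ℝ} (hT : Measurable T) {A B : Set Ω} (hA : MeasurableSet A) (hB : MeasurableSet B)
    (hAB : Disjoint A B) (hμA : μ A = 1 / 2) (hμB : μ B = 1 / 2) {m : ℝ} {v : ℝ≥0} (hv : v ≠ 0)
    (hTA : μ[|A].map T = gaussianReal m v) (hTB : μ[|B].map T = gaussianReal (-m) v)
    {e : ℝ → ℝ} (he : Measurable e) (he_symm : ∀ q, e q = e (1 - q)) {a : ℝ}
    (ha : a = 2 * m / √v) :
    ∫ ω, e (μ[A.indicator 1 | MeasurableSpace.comap T inferInstance] ω) ∂μ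
      = ∫ z, e (Real.sigmoid (a * (z + a / 2))) ∂gaussianReal 0 1 := by
  have hlaw : μ.map T = (1 / 2 : ℝ≥0∞) • (gaussianReal m v + gaussianReal (-m) v) := by
    conv_lhs => rw [eq_half_smul_cond_add_cond hA hB hAB hμA hμB]
    rw [Measure.map_smul, Measure.map_add _ _ hT, hTA, hTB]
  have hlawA : (μ.restrict A).map T = (1 / 2 : ℝ≥0∞) • gaussianReal m v := by
    rw [restrict_eq_smul_cond (measure_ne_top μ A), hμA, Measure.map_smul, hTA]
  have hposterior : μ[A.indicator 1 | MeasurableSpace.comap T inferInstance]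
      =ᵐ[μ] (fun t => Real.sigmoid (2 * m * t / v)) ∘ T :=
    condExp_indicator_comap_ae_eq hT hA (by fun_prop) (fun _ => Real.sigmoid_nonneg _)
      (by rw [hlaw, hlawA, withDensity_smul_measure, withDensity_sigmoid_gaussianReal_add_neg m hv])
  have hentropy_even (t : ℝ) :
      e (Real.sigmoid (2 * m * -t / v)) = e (Real.sigmoid (2 * m * t / v)) := by
    rw [mul_neg, neg_div, Real.sigmoid_neg, ← he_symm]
  have hF : Measurable fun t => e (Real.sigmoid (2 * m * t / v)) := he.comp (by fun_prop)
  calc ∫ ω, e (μ[A.indicator 1 | MeasurableSpace.comap T inferInstance] ω) ∂μ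
      = ∫ ω, e (Real.sigmoid (2 * m * T ω / v)) ∂μ := integral_congr_ae (hposterior.fun_comp e)
    _ = ∫ t, e (Real.sigmoid (2 * m * t / v)) ∂μ.map T :=
        (integral_map hT.aemeasurable hF.aestronglyMeasurable).symm
    _ = ∫ t, e (Real.sigmoid (2 * m * t / v)) ∂gaussianReal m v := by
        rw [hlaw]
        exact integral_half_smul_gaussianReal_add_neg_of_even hF hentropy_even m v
    _ = ∫ z, e (Real.sigmoid (2 * m * (√v * z + m) / v)) ∂gaussianReal 0 1 := by
        rw [gaussianReal_eq_map_standard m v, integral_map (by fun_prop) hF.aestronglyMeasurable]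
    _ = ∫ z, e (Real.sigmoid (a * (z + a / 2))) ∂gaussianReal 0 1 := by
        congr with z
        subst ha
        field_simp
        rw [Real.sq_sqrt v.coe_nonneg]

end ProbabilityTheory

lemma sigmoid_eq_real_sigmoid : sigmoid = Real.sigmoid := funext fun _ => one_div _

lemma expertise_eq_of_isUnit_det {p : ℕ} {S : Matrix (Fin p) (Fin p) ℝ} (hS : IsUnit S.det)
    (μv w : Fin p → ℝ) : expertise S μv w = 2 * (w ⬝ᵥ μv) / √(w ⬝ᵥ S *ᵥ w) := by
  rw [expertise, mulVec_smul, mulVec_mulVec, mul_nonsing_inv S hS, one_mulVec, dotProduct_smul,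
    smul_eq_mul]

lemma expertise_smul {p : ℕ} (S : Matrix (Fin p) (Fin p) ℝ) (μv w : Fin p → ℝ) {s : ℝ}
    (hs : 0 < s) : expertise S μv (s • w) = expertise S μv w := by
  have hquad : (s • w) ⬝ᵥ S *ᵥ (s • w) = (s * s) * (w ⬝ᵥ S *ᵥ w) := by
    rw [mulVec_smul, dotProduct_smul, smul_dotProduct, smul_eq_mul, smul_eq_mul, mul_assoc]
  rw [expertise, expertise, hquad, smul_dotProduct, smul_eq_mul, Real.sqrt_mul (by positivity),
    Real.sqrt_mul_self hs.le, mul_div_mul_left _ _ hs.ne']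

/-- In the balanced two-class Gaussian model, for a proper-loss entropy `e_ℓ` symmetric about
`1/2`, the refinement error of `f(x) = σ(wᵀx)` equals
`E_{z ∼ N(0,1)}[e_ℓ(σ(a_w (z + a_w/2)))]`; in particular it is invariant under positive
rescaling of `w`. -/
theorem stmt14 {p : ℕ} {Ω : Type*} [MeasurableSpace Ω] {μ : Measure Ω}
    [IsProbabilityMeasure μ]
    (S : Matrix (Fin p) (Fin p) ℝ) (hS : S.PosDef) (μv : Fin p → ℝ)
    (X : Ω → Fin p → ℝ) (Y : Ω → ℝ) (hX : Measurable X) (hY : Measurable Y)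
    (hY1 : μ {ω | Y ω = 1} = 1 / 2) (hYm1 : μ {ω | Y ω = -1} = 1 / 2)
    (hpos : ∀ u : Fin p → ℝ, Measure.map (fun ω => u ⬝ᵥ X ω) (μ[|{ω | Y ω = 1}])
      = gaussianReal (u ⬝ᵥ μv) (Real.toNNReal (u ⬝ᵥ S.mulVec u)))
    (hneg : ∀ u : Fin p → ℝ, Measure.map (fun ω => u ⬝ᵥ X ω) (μ[|{ω | Y ω = -1}])
      = gaussianReal (-(u ⬝ᵥ μv)) (Real.toNNReal (u ⬝ᵥ S.mulVec u)))
    (eℓ : ℝ → ℝ) (heℓ_meas : Measurable eℓ) (heℓ_symm : ∀ q : ℝ, eℓ q = eℓ (1 - q))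
    (w : Fin p → ℝ) (hw : w ≠ 0) :
    refR μ X Y eℓ w
        = ∫ z, eℓ (sigmoid (expertise S μv w * (z + expertise S μv w / 2)))
            ∂(gaussianReal 0 1)
      ∧ ∀ s : ℝ, 0 < s → refR μ X Y eℓ (s • w) = refR μ X Y eℓ w := by
  have hindicator : (fun ω => if Y ω = 1 then (1 : ℝ) else 0) = {ω | Y ω = 1}.indicator 1 := by
    ext ω
    simp [Set.indicator_apply]
  have hdisj : Disjoint {ω | Y ω = 1} {ω | Y ω = -1} :=
    Set.disjoint_left.mpr fun ω (h1 : Y ω = 1) (h2 : Y ω = -1) => by norm_num [h1] at h2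
  have hrefR : ∀ u ≠ 0, refR μ X Y eℓ u
      = ∫ z, eℓ (sigmoid (expertise S μv u * (z + expertise S μv u / 2))) ∂(gaussianReal 0 1) := by
    intro u hu
    have hvar : 0 < u ⬝ᵥ S *ᵥ u := by simpa using hS.dotProduct_mulVec_pos hu
    rw [refR, hindicator, sigmoid_eq_real_sigmoid]
    refine integral_comp_condExp_indicator_of_gaussian_classes (by fun_prop)
      (hY (measurableSet_singleton 1)) (hY (measurableSet_singleton (-1))) hdisj hY1 hYm1
      (Real.toNNReal_pos.mpr hvar).ne' (hpos u) (hneg u) heℓ_meas heℓ_symm ?_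
    rw [expertise_eq_of_isUnit_det hS.det_pos.ne'.isUnit, Real.coe_toNNReal _ hvar.le]
  exact ⟨hrefR w hw, fun s hs => by
    rw [hrefR _ (smul_ne_zero hs.ne' hw), hrefR w hw, expertise_smul S μv w hs]⟩
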